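/- arXiv:1702.06099 — 6 statements merged into one kernel-verified Lean document; each statement's English description precedes it below -/
import Mathlib

section
/- The function f(x) = 2 - 2·log_x(2) + 2/(x·ln x) defined for x > 2 attains its minimum at x = -W_{-1}(-ln 2/e)/ln 2, where W_{-1} is the lower branch of the Lambert W function; equivalently, the minimizer x satisfies x = log_2(e·x). -/
/-!
Write `f x = 2 - 2 (x log 2 - 1) / (x log x)`. At a root `a` of `a log 2 = log a + 1` the numerator
`a log 2 - 1` equals `log a`, so `f a = 2 - 2 / a`, and `f x ≥ f a` amounts to
`a (x log 2 - 1) ≤ x log x`. Substituting `a log 2 = log a + 1`, this says that the convex function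
`x log x` lies above its tangent line `x log a + x - a` at `a`. The root exists in `(2, 4)` by the
intermediate value theorem, and it is the fixed point `a = log₂ (e a)`.
-/

open Real Set

noncomputable section

def competitiveRatio (x : ℝ) : ℝ := 2 - 2 * logb x 2 + 2 / (x * log x)

theorem competitiveRatio_eq {x : ℝ} (hx : 1 < x) :
    competitiveRatio x = 2 - 2 * (x * log 2 - 1) / (x * log x) := by
  have hlog : 0 < log x := log_pos hx
  have hx₀ : 0 < x := zero_lt_one.trans hx
  rw [competitiveRatio, logb]
  field_simp
  ring

theorem mul_log_add_sub_le_mul_log {a x : ℝ} (ha : 0 < a) (hx : 0 < x) :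
    x * log a + x - a ≤ x * log x := by
  have h := mul_le_mul_of_nonneg_left (log_le_sub_one_of_pos (div_pos ha hx)) hx.le
  rw [log_div ha.ne' hx.ne', mul_sub, mul_sub, mul_div_cancel₀ a hx.ne'] at h
  linarith

theorem exists_mul_log_two_eq_log_add_one : ∃ a ∈ Ioo (2 : ℝ) 4, a * log 2 = log a + 1 := by
  have hlog2 := log_two_gt_d9
  have hlog2' := log_two_lt_d9
  have hlog4 : log 4 = 2 * log 2 := by
    rw [show (4 : ℝ) = 2 ^ 2 by norm_num, log_pow, Nat.cast_ofNat]
  have hcont : ContinuousOn (fun x => x * log 2 - log x - 1) (Icc 2 4) := by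
    fun_prop (disch := intro x hx; linarith [hx.1])
  obtain ⟨a, ha, hroot⟩ := intermediate_value_Ioo (by norm_num) hcont
    (show (0 : ℝ) ∈ Ioo _ _ by constructor <;> norm_num [hlog4] <;> linarith)
  exact ⟨a, ha, by linarith [hroot]⟩

variable {a : ℝ}

theorem logb_two_exp_one_mul_eq (ha : 0 < a) (hfix : a * log 2 = log a + 1) :
    logb 2 (exp 1 * a) = a := by
  rw [logb, log_mul (exp_ne_zero 1) ha.ne', log_exp, add_comm, ← hfix,
    mul_div_cancel_right₀ a (log_pos one_lt_two).ne']

theorem competitiveRatio_eq_of_mul_log_two_eq (ha : 1 < a) (hfix : a * log 2 = log a + 1) :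
    competitiveRatio a = 2 - 2 / a := by
  have hlog : 0 < log a := log_pos ha
  rw [competitiveRatio_eq ha, show a * log 2 - 1 = log a by linarith]
  field_simp

theorem competitiveRatio_ge_of_mul_log_two_eq (ha : 0 < a) (hfix : a * log 2 = log a + 1)
    {x : ℝ} (hx : 1 < x) : 2 - 2 / a ≤ competitiveRatio x := by
  have hx₀ : 0 < x := zero_lt_one.trans hx
  have hxlog : 0 < x * log x := mul_pos hx₀ (log_pos hx)
  have htangent : a * (x * log 2 - 1) ≤ x * log x := by
    have := mul_log_add_sub_le_mul_log ha hx₀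
    linear_combination this + x * hfix
  rw [competitiveRatio_eq hx, sub_le_sub_iff_left, mul_div_assoc, ← mul_one_div 2 a]
  gcongr 2 * ?_
  rw [div_le_div_iff₀ hxlog ha]
  linarith

end

/-- The function `f x = 2 - 2·log_x 2 + 2/(x·ln x)` on `x > 2` attains its minimum at the
point `x₀` characterized by `x₀ = log₂ (e·x₀)` (equivalently `x₀ = -W₋₁(-ln 2 / e)/ln 2`). -/
theorem min_of_competitive_ratio_function :
    ∃ x₀ : ℝ, 2 < x₀ ∧ x₀ = Real.logb 2 (Real.exp 1 * x₀) ∧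
      ∀ x : ℝ, 2 < x →
        2 - 2 * Real.logb x₀ 2 + 2 / (x₀ * Real.log x₀) ≤
          2 - 2 * Real.logb x 2 + 2 / (x * Real.log x) := by
  obtain ⟨a, ⟨ha, -⟩, hfix⟩ := exists_mul_log_two_eq_log_add_one
  have ha₀ : 0 < a := two_pos.trans ha
  refine ⟨a, ha, (logb_two_exp_one_mul_eq ha₀ hfix).symm, fun x hx => ?_⟩
  calc competitiveRatio a = 2 - 2 / a :=
        competitiveRatio_eq_of_mul_log_two_eq (one_lt_two.trans ha) hfix
    _ ≤ competitiveRatio x := competitiveRatio_ge_of_mul_log_two_eq ha₀ hfix (one_lt_two.trans hx)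
end

section
/- For x > 2 and any α ∈ [0,1], the sum of integrals ∫_0^{α+log_x 2 - 1} x^{δ+1} dδ + ∫_{α+log_x 2 - 1}^{α} (2x^α - x^δ) dδ + ∫_α^1 x^δ dδ equals x^α · (2 - 2·log_x 2 + 2/(x·ln x)); in particular, this value is independent of α. -/
/-!
All three integrands are exponentials in `δ`, integrated by `x ^ δ / log x`. The breakpoint
`α + log_x 2 - 1` is chosen so that `x ^ (α + log_x 2) = 2 x ^ α`: after the shift `δ ↦ δ + 1`
in the first integral, every boundary term is a multiple of `x ^ α` except the two `± x / log x`
contributed at `δ = 1`, which cancel.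
-/

open intervalIntegral

namespace Real

theorem integral_const_rpow {b : ℝ} (hb₀ : 0 < b) (hb₁ : b ≠ 1) (a c : ℝ) :
    ∫ δ in a..c, b ^ δ = (b ^ c - b ^ a) / log b := by
  rw [sub_div]
  refine integral_eq_sub_of_hasDerivAt (f := fun δ => b ^ δ / log b) (fun δ _ => ?_)
    ((continuous_const_rpow hb₀.ne').intervalIntegrable a c)
  have hlog : log b ≠ 0 := log_ne_zero_of_pos_of_ne_one hb₀ hb₁
  simpa [hlog] using ((hasStrictDerivAt_const_rpow hb₀ δ).hasDerivAt.div_const (log b))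

theorem rpow_add_logb {b y : ℝ} (hb₀ : 0 < b) (hb₁ : b ≠ 1) (hy : 0 < y) (a : ℝ) :
    b ^ (a + logb b y) = y * b ^ a := by
  rw [rpow_add hb₀, rpow_logb hb₀ hb₁ hy, mul_comm]

end Real

theorem integral_identity_case_one_general (x : ℝ) (hx : 2 < x) (α : ℝ) :
    (∫ δ in (0:ℝ)..(α + Real.logb x 2 - 1), x ^ (δ + 1)) +
    (∫ δ in (α + Real.logb x 2 - 1)..α, (2 * x ^ α - x ^ δ)) +
    (∫ δ in α..(1:ℝ), x ^ δ) =
    x ^ α * (2 - 2 * Real.logb x 2 + 2 / (x * Real.log x)) := by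
  have hx₀ : 0 < x := by linarith
  have hx₁ : x ≠ 1 := by linarith
  have hlog : Real.log x ≠ 0 := Real.log_ne_zero_of_pos_of_ne_one hx₀ hx₁
  have hshift : x ^ (α + Real.logb x 2) = 2 * x ^ α := Real.rpow_add_logb hx₀ hx₁ two_pos α
  rw [integral_comp_add_right (fun δ => x ^ δ) 1,
    integral_sub intervalIntegrable_const
      ((Real.continuous_const_rpow hx₀.ne').intervalIntegrable _ _),
    integral_const, Real.integral_const_rpow hx₀ hx₁, Real.integral_const_rpow hx₀ hx₁,
    Real.integral_const_rpow hx₀ hx₁, Real.rpow_sub_one hx₀.ne', sub_add_cancel, zero_add,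
    Real.rpow_one, hshift, smul_eq_mul]
  field_simp
  ring

/-- Case 1 integral identity in the analysis of the randomized geometric guessing
algorithm for online sequence partitioning with `p = 2`. -/
theorem integral_identity_case_one (x : ℝ) (hx : 2 < x) (α : ℝ) (hα : α ∈ Set.Icc (0:ℝ) 1) :
    (∫ δ in (0:ℝ)..(α + Real.logb x 2 - 1), x ^ (δ + 1)) +
    (∫ δ in (α + Real.logb x 2 - 1)..α, (2 * x ^ α - x ^ δ)) +
    (∫ δ in α..(1:ℝ), x ^ δ) =
    x ^ α * (2 - 2 * Real.logb x 2 + 2 / (x * Real.log x)) :=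
  integral_identity_case_one_general x hx α
end

section
/- For x > 2 and any α ∈ [0, 1 - log_x 2], the sum of integrals ∫_0^α (2x^α - x^δ) dδ + ∫_α^{α + log_x 2} x^δ dδ + ∫_{α + log_x 2}^1 (2x^α - x^{δ-1}) dδ equals x^α · (2 - 2·log_x 2 + 2/(x·ln x)). -/
open intervalIntegral

lemma int_exp_mul (c : ℝ) (hc : c ≠ 0) (a b : ℝ) :
    ∫ δ in a..b, Real.exp (c * δ) = (Real.exp (c * b) - Real.exp (c * a)) / c := by
  have h : ∀ t : ℝ, HasDerivAt (fun δ => Real.exp (c * δ) / c) (Real.exp (c * t)) t := by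
    intro t
    have := ((Real.hasDerivAt_exp (c * t)).comp t ((hasDerivAt_id t).const_mul c))
    simpa [mul_comm, mul_div_assoc, mul_div_cancel_left₀ _ hc] using this.div_const c
  have := intervalIntegral.integral_eq_sub_of_hasDerivAt (fun t _ => h t)
    ((Real.continuous_exp.comp (continuous_const.mul continuous_id)).intervalIntegrable a b)
  rw [this]; ring

/-- Case 2 integral identity in the analysis of the randomized geometric guessing
algorithm for online sequence partitioning with `p = 2`. -/
theorem integral_identity_case_two (x : ℝ) (hx : 2 < x) (α : ℝ)
    (hα : α ∈ Set.Icc (0:ℝ) (1 - Real.logb x 2)) :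
    (∫ δ in (0:ℝ)..α, (2 * x ^ α - x ^ δ)) +
    (∫ δ in α..(α + Real.logb x 2), x ^ δ) +
    (∫ δ in (α + Real.logb x 2)..(1:ℝ), (2 * x ^ α - x ^ (δ - 1))) =
    x ^ α * (2 - 2 * Real.logb x 2 + 2 / (x * Real.log x)) := by
  have hx0 : (0:ℝ) < x := by linarith
  have hL : 0 < Real.log x := Real.log_pos (by linarith)
  have hLne : Real.log x ≠ 0 := ne_of_gt hL
  set L := Real.log x with hLdef
  set β := Real.logb x 2 with hβ
  have hrp : ∀ δ : ℝ, x ^ δ = Real.exp (L * δ) := fun δ => Real.rpow_def_of_pos hx0 δ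
  have hexpint : ∀ a b : ℝ, ∫ δ in a..b, x ^ δ = (x ^ b - x ^ a) / L := by
    intro a b
    simp_rw [hrp]
    exact int_exp_mul L hLne a b
  have hxβ : x ^ β = 2 := Real.rpow_logb hx0 (by linarith) (by norm_num)
  have hint1 : IntervalIntegrable (fun δ => x ^ δ) MeasureTheory.volume 0 α := by
    simp_rw [hrp]
    exact (Real.continuous_exp.comp (continuous_const.mul continuous_id)).intervalIntegrable _ _
  have hint3 : IntervalIntegrable (fun δ : ℝ => x ^ (δ - 1)) MeasureTheory.volume (α + β) 1 := by
    simp_rw [hrp]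
    exact (Real.continuous_exp.comp (continuous_const.mul (continuous_id.sub continuous_const))).intervalIntegrable _ _
  rw [intervalIntegral.integral_sub intervalIntegrable_const hint1,
      intervalIntegral.integral_sub intervalIntegrable_const hint3,
      intervalIntegral.integral_const, intervalIntegral.integral_const,
      hexpint 0 α, hexpint α (α + β)]
  have h3 : ∫ δ in (α + β)..(1:ℝ), x ^ (δ - 1) = (x ^ (0:ℝ) - x ^ (α + β - 1)) / L := by
    have : ∀ δ : ℝ, x ^ (δ - 1) = Real.exp (L * δ) * Real.exp (-L) := by
      intro δ
      rw [hrp (δ - 1), ← Real.exp_add]; ring_nf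
    simp_rw [this]
    rw [intervalIntegral.integral_mul_const, int_exp_mul L hLne]
    have k1 : Real.exp (L * (α + β - 1)) = Real.exp (L * (α + β)) * Real.exp (-L) := by
      rw [← Real.exp_add]; congr 1; ring
    have k2 : Real.exp (L * 0) = Real.exp (L * 1) * Real.exp (-L) := by
      rw [← Real.exp_add]; congr 1; ring
    rw [hrp (0:ℝ), k2]
    ring
  rw [h3]
  have e1 : x ^ (α + β) = x ^ α * 2 := by rw [Real.rpow_add hx0, hxβ]
  have e2 : x ^ (α + β - 1) = x ^ α * 2 / x := by
    rw [Real.rpow_sub hx0, e1, Real.rpow_one]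
  rw [e1, e2, Real.rpow_zero]
  field_simp
  ring
end

section
/- Let X = w_1, ..., w_n be a sequence of positive reals, p ≥ 1 an integer, and B a real such that there exists a partition of X into at most p contiguous blocks each of total weight at most B. Then the greedy left-to-right procedure that starts a new block exactly when adding the next element would exceed B produces at most p blocks. -/
open Finset

/-- The greedy (Probe) cut positions: `greedyCuts w n B k` is the position reached after `k`
maximal blocks, where each block is extended as long as its total weight stays at most `B`. -/
noncomputable def greedyCuts (w : ℕ → ℝ) (n : ℕ) (B : ℝ) : ℕ → ℕ
  | 0 => 0
  | k + 1 =>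
      sSup {j | j ≤ n ∧ greedyCuts w n B k ≤ j ∧
        ∑ i ∈ Finset.Ico (greedyCuts w n B k) j, w i ≤ B}

/-! The greedy procedure "stays ahead": if the `k`-th cut of any feasible partition lies at or
before the `k`-th greedy cut, then so does its `(k+1)`-st cut, since the greedy block starting
there is a sub-interval of the partition's block and non-negative weights make it feasible too.
After `p` blocks the greedy cut is therefore at least the partition's last cut `n`. -/

section greedyCuts

variable (w : ℕ → ℝ) (n : ℕ) (B : ℝ)

theorem greedyCuts_le (k : ℕ) : greedyCuts w n B k ≤ n := by
  cases k with
  | zero => exact Nat.zero_le n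
  | succ k => exact csSup_le' fun j hj => hj.1

theorem le_greedyCuts_succ {k j : ℕ} (hjn : j ≤ n) (hkj : greedyCuts w n B k ≤ j)
    (hsum : ∑ i ∈ Ico (greedyCuts w n B k) j, w i ≤ B) : j ≤ greedyCuts w n B (k + 1) :=
  le_csSup ⟨n, fun _ hx => hx.1⟩ ⟨hjn, hkj, hsum⟩

variable {w n B}

theorem le_greedyCuts_succ_of_le {k a b : ℕ} (hw : ∀ i, 0 ≤ w i) (ha : a ≤ greedyCuts w n B k)
    (hbn : b ≤ n) (hblock : ∑ i ∈ Ico a b, w i ≤ B) : b ≤ greedyCuts w n B (k + 1) := by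
  set g := greedyCuts w n B k
  have hsub : Ico g (max g b) ⊆ Ico a b := by
    intro x
    simp only [mem_Ico]
    omega
  have hfeasible : max g b ≤ greedyCuts w n B (k + 1) :=
    le_greedyCuts_succ w n B (max_le (greedyCuts_le w n B k) hbn) (le_max_left g b)
      ((sum_le_sum_of_subset_of_nonneg hsub fun i _ _ => hw i).trans hblock)
  exact (le_max_right g b).trans hfeasible

end greedyCuts

theorem probe_correct_general (w : ℕ → ℝ) (hw : ∀ i, 0 < w i) (n p : ℕ) (B : ℝ)
    (h : ∃ s : Fin (p + 1) → ℕ, Monotone s ∧ s 0 = 0 ∧ s (Fin.last p) = n ∧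
      ∀ j : Fin p, ∑ i ∈ Finset.Ico (s j.castSucc) (s j.succ), w i ≤ B) :
    greedyCuts w n B p = n := by
  obtain ⟨s, hmono, hs0, hslast, hblock⟩ := h
  have ahead : ∀ i : Fin (p + 1), s i ≤ greedyCuts w n B i := by
    refine Fin.induction (by simp [hs0, greedyCuts]) fun j ih => ?_
    rw [Fin.val_succ]
    exact le_greedyCuts_succ_of_le (fun i => (hw i).le) ih
      (hslast ▸ hmono (Fin.le_last _)) (hblock j)
  refine (greedyCuts_le w n B p).antisymm ?_
  simpa [hslast] using ahead (Fin.last p)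

/-- Probe correctness: if the sequence `w_0, …, w_{n-1}` of positive weights admits a partition
into at most `p` contiguous blocks each of weight at most `B`, then the greedy left-to-right
procedure that starts a new block exactly when adding the next element would exceed `B`
produces at most `p` blocks, i.e. it reaches position `n` within `p` blocks. -/
theorem probe_correct (w : ℕ → ℝ) (hw : ∀ i, 0 < w i) (n p : ℕ) (hp : 1 ≤ p) (B : ℝ)
    (h : ∃ s : Fin (p + 1) → ℕ, Monotone s ∧ s 0 = 0 ∧ s (Fin.last p) = n ∧
      ∀ j : Fin p, ∑ i ∈ Finset.Ico (s j.castSucc) (s j.succ), w i ≤ B) :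
    greedyCuts w n B p = n :=
  probe_correct_general w hw n p B h
end

section
/- Let p be a power of two, α = 2^{1/p}, and let L divide p with L a power of two. For a super-partition with base i that has been merged down to length L - t (where 1 ≤ t ≤ L/2) by repeatedly pairwise merging from the left starting from L equal-ratio blocks of p/L consecutive geometric terms each, the maximum block weight equals α^i · α^{2(t-1)p/L} · (α^{2p/L} - 1)/(α - 1). -/
/-- Maximum block weight of a super-partition merged down to length `L - t`:
the block merged at step `t` has weight `α^i · α^(2(t-1)p/L) · (α^(2p/L) - 1)/(α - 1)`, and
it dominates all earlier merged blocks and all remaining unmerged blocks. -/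
theorem superpartition_max_weight (p L t i : ℕ)
    (hp : ∃ k, p = 2 ^ k) (hL : ∃ k, L = 2 ^ k) (hLp : L ∣ p)
    (ht1 : 1 ≤ t) (ht2 : t ≤ L / 2) (hi : 1 ≤ i) :
    let α : ℝ := 2 ^ ((1:ℝ)/p)
    let s : ℕ → ℝ := fun k =>
      α ^ (((k:ℝ) - 1) * p / L) * α ^ ((i:ℝ) - 1) * (α ^ ((p:ℝ)/L + 1) - α) / (α - 1)
    let M : ℝ := α ^ (i:ℝ) * α ^ (2 * ((t:ℝ) - 1) * p / L) * (α ^ (2 * (p:ℝ)/L) - 1) / (α - 1)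
    s (2*t - 1) + s (2*t) = M ∧
    (∀ j, 1 ≤ j → j ≤ t → s (2*j - 1) + s (2*j) ≤ M) ∧
    (∀ k, 2*t + 1 ≤ k → k ≤ L → s k ≤ M) := by
  obtain ⟨kp, rfl⟩ := hp
  have hp1 : 1 ≤ 2 ^ kp := Nat.one_le_two_pow
  set p := 2 ^ kp with hpdef
  have hL1 : 1 ≤ L := by obtain ⟨k, rfl⟩ := hL; exact Nat.one_le_two_pow
  have hLle : L ≤ p := Nat.le_of_dvd (by omega) hLp
  intro α s M
  have hα0 : (0:ℝ) < α := by positivity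
  have hα1 : (1:ℝ) < α := by
    have h : (0:ℝ) < (1:ℝ)/p := by positivity
    exact (Real.one_lt_rpow_iff_of_pos (by norm_num)).mpr (Or.inl ⟨one_lt_two, h⟩)
  have hαd : (0:ℝ) < α - 1 := by linarith
  have hP0 : (0:ℝ) < (p:ℝ) := by positivity
  have hL0 : (0:ℝ) < (L:ℝ) := by positivity
  set u : ℝ := (p:ℝ)/L with hu
  have hu0 : 0 < u := by positivity
  have hαu1 : 1 < α ^ u := (Real.one_lt_rpow_iff_of_pos hα0).mpr (Or.inl ⟨hα1, hu0⟩)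
  have key : ∀ k : ℕ, s k = α ^ (((k:ℝ)-1)*u + i) * (α ^ u - 1) / (α - 1) := by
    intro k
    show α ^ (((k:ℝ) - 1) * p / L) * α ^ ((i:ℝ) - 1) * (α ^ ((p:ℝ)/L + 1) - α) / (α - 1) = _
    rw [Real.rpow_add hα0 _ 1, Real.rpow_one, Real.rpow_sub hα0, Real.rpow_one,
      Real.rpow_add hα0, mul_div_assoc ((k:ℝ)-1)]
    rw [← hu]
    field_simp
  have hMkey : M = α ^ ((2*(t:ℝ)-2)*u + i) * ((α ^ u - 1) * (α ^ u + 1)) / (α - 1) := by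
    show α ^ (i:ℝ) * α ^ (2 * ((t:ℝ) - 1) * p / L) * (α ^ (2 * (p:ℝ)/L) - 1) / (α - 1) = _
    have h1 : 2 * ((t:ℝ) - 1) * p / L = (2*(t:ℝ)-2)*u := by rw [hu]; ring
    have h2 : 2 * (p:ℝ)/L = u + u := by rw [hu]; ring
    rw [h1, h2, Real.rpow_add hα0 ((2*(t:ℝ)-2)*u) i, Real.rpow_add hα0 u u]
    generalize α ^ ((2*(t:ℝ)-2)*u) = A
    generalize α ^ ((i:ℝ) : ℝ) = B
    generalize α ^ u = X
    ring
  have hsum : ∀ j : ℕ, 1 ≤ j → s (2*j - 1) + s (2*j) =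
      α ^ ((2*(j:ℝ)-2)*u + i) * ((α ^ u - 1) * (α ^ u + 1)) / (α - 1) := by
    intro j hj
    rw [key, key]
    have hc1 : ((2*j - 1 : ℕ) : ℝ) = 2*(j:ℝ) - 1 := by
      push_cast [Nat.cast_sub (by omega : 1 ≤ 2*j)]; ring
    rw [hc1]
    push_cast
    have e1 : (2*(j:ℝ) - 1 - 1) * u + i = ((2*(j:ℝ)-2)*u + i) := by ring
    have e2 : (2*(j:ℝ) - 1) * u + i = ((2*(j:ℝ)-2)*u + i) + u := by ring
    rw [e1, e2, Real.rpow_add hα0 ((2*(j:ℝ)-2)*u + i) u]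
    generalize α ^ ((2*(j:ℝ)-2)*u + (i:ℝ)) = A
    generalize α ^ u = X
    ring
  refine ⟨?_, ?_, ?_⟩
  · rw [hsum t ht1, hMkey]
  · intro j hj1 hjt
    rw [hsum j hj1, hMkey]
    rw [div_le_div_iff_of_pos_right hαd]
    have hjt' : (j:ℝ) ≤ t := by exact_mod_cast hjt
    have hmono : α ^ ((2*(j:ℝ)-2)*u + i) ≤ α ^ ((2*(t:ℝ)-2)*u + i) :=
      (Real.rpow_le_rpow_left_iff hα1).mpr (by nlinarith)
    have hpos : (0:ℝ) ≤ (α ^ u - 1) * (α ^ u + 1) := by nlinarith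
    exact mul_le_mul_of_nonneg_right hmono hpos
  · intro k hk1 hkL
    rw [key k, hMkey, div_le_div_iff_of_pos_right hαd]
    have hkL' : (k:ℝ) ≤ L := by exact_mod_cast hkL
    have ht' : (1:ℝ) ≤ t := by exact_mod_cast ht1
    have hLu : (L:ℝ) * u = p := by rw [hu]; field_simp
    have hαP : α ^ ((p:ℝ)) = 2 := by
      show ((2:ℝ) ^ ((1:ℝ)/p)) ^ ((p:ℝ)) = 2
      rw [← Real.rpow_mul (by norm_num : (0:ℝ) ≤ 2), one_div,
        inv_mul_cancel₀ (ne_of_gt hP0), Real.rpow_one]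
    have hA : α ^ (((k:ℝ)-1)*u + i) ≤ α ^ (((L:ℝ)-1)*u + i) :=
      (Real.rpow_le_rpow_left_iff hα1).mpr (by nlinarith)
    have hA2 : α ^ (((L:ℝ)-1)*u + i) = 2 * α ^ ((i:ℝ) - u) := by
      have e : ((L:ℝ)-1)*u + i = (p:ℝ) + ((i:ℝ) - u) := by rw [← hLu]; ring
      rw [e, Real.rpow_add hα0, hαP]
    have hB : α ^ ((i:ℝ) : ℝ) ≤ α ^ ((2*(t:ℝ)-2)*u + i) :=
      (Real.rpow_le_rpow_left_iff hα1).mpr (by nlinarith)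
    have hiu : α ^ ((i:ℝ) - u) * α ^ u = α ^ ((i:ℝ):ℝ) := by
      rw [← Real.rpow_add hα0]; ring_nf
    have hAi : (0:ℝ) < α ^ ((i:ℝ) - u) := Real.rpow_pos_of_pos hα0 _
    have hBp : (0:ℝ) < α ^ ((2*(t:ℝ)-2)*u + i) := Real.rpow_pos_of_pos hα0 _
    have hchain : α ^ (((k:ℝ)-1)*u + i) ≤ α ^ ((2*(t:ℝ)-2)*u + i) * (α ^ u + 1) := by
      have h1 : 2 * α ^ ((i:ℝ) - u) ≤ α ^ ((i:ℝ):ℝ) * (α ^ u + 1) := by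
        rw [← hiu]
        nlinarith [mul_nonneg (mul_nonneg hAi.le (sub_nonneg.mpr hαu1.le))
          (by linarith : (0:ℝ) ≤ α ^ u + 2)]
      have h2 : α ^ ((i:ℝ):ℝ) * (α ^ u + 1) ≤ α ^ ((2*(t:ℝ)-2)*u + i) * (α ^ u + 1) :=
        mul_le_mul_of_nonneg_right hB (by linarith)
      calc α ^ (((k:ℝ)-1)*u + i) ≤ α ^ (((L:ℝ)-1)*u + i) := hA
        _ = 2 * α ^ ((i:ℝ) - u) := hA2
        _ ≤ α ^ ((i:ℝ):ℝ) * (α ^ u + 1) := h1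
        _ ≤ _ := h2
    calc α ^ (((k:ℝ)-1)*u + i) * (α ^ u - 1)
        ≤ (α ^ ((2*(t:ℝ)-2)*u + i) * (α ^ u + 1)) * (α ^ u - 1) :=
          mul_le_mul_of_nonneg_right hchain (by linarith)
      _ = α ^ ((2*(t:ℝ)-2)*u + i) * ((α ^ u - 1) * (α ^ u + 1)) := by ring
end

section
/- Let p ≥ 2, let a_1,...,a_p be positive reals, let x_max = max a_i, let α ∈ (1,2), and let H = {i : a_i ≥ x_max/α} and L = [p] \ H. Consider the sequence X = a_1,...,a_p followed by (|L|+1)·⌈2x_max/α⌉ ones. Then every partition of X into p contiguous blocks has some block of total weight at least 2x_max/α. -/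
open Finset

/-! If every block weighs less than `T = 2x_max/α`, no block holds two heavy items and no block
holds `⌈T⌉` ones. Let block `r` be the one containing position `p - 1`, the last of the `a`'s.
Blocks `0, …, r` hold every heavy item, so `|H| ≤ r + 1`; blocks `r, …, p - 1` hold all
`(|L| + 1)⌈T⌉` ones, so `|L| + 1 < p - r`. Hence `p = |H| + |L| < p`. -/

theorem Finset.sum_Ico_sum_Ico_of_monotone {M : Type*} [AddCommMonoid M] {s : ℕ → ℕ}
    (hs : Monotone s) (f : ℕ → M) {a b : ℕ} (hab : a ≤ b) :
    ∑ j ∈ Ico a b, ∑ i ∈ Ico (s j) (s (j + 1)), f i = ∑ i ∈ Ico (s a) (s b), f i := by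
  induction b, hab using Nat.le_induction with
  | base => simp
  | succ b hab ih => rw [sum_Ico_succ_top hab, ih, sum_Ico_consecutive _ (hs hab) (hs b.le_succ)]

theorem Finset.card_filter_Ico_eq_sum_of_monotone {s : ℕ → ℕ} (hs : Monotone s) (P : ℕ → Prop)
    [DecidablePred P] {a b : ℕ} (hab : a ≤ b) :
    #{i ∈ Ico (s a) (s b) | P i} = ∑ j ∈ Ico a b, #{i ∈ Ico (s j) (s (j + 1)) | P i} := by
  simp only [card_filter]
  exact (sum_Ico_sum_Ico_of_monotone hs _ hab).symm

theorem Nat.exists_apply_lt_le_apply_succ {α : Type*} [LinearOrder α] {f : ℕ → α} {c : α} {n : ℕ}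
    (h0 : f 0 < c) (hn : c ≤ f n) : ∃ r < n, f r < c ∧ c ≤ f (r + 1) := by
  induction n with
  | zero => exact absurd hn (not_le.2 h0)
  | succ n ih =>
    by_cases h : f n < c
    · exact ⟨n, n.lt_succ_self, h, hn⟩
    · obtain ⟨r, hr, hfr⟩ := ih (not_lt.1 h)
      exact ⟨r, by omega, hfr⟩

section LightBlock

variable {ι : Type*} {S : Finset ι} {w : ι → ℝ} {T : ℝ} {P : ι → Prop} [DecidablePred P]

theorem card_filter_le_one_of_sum_lt (hw : ∀ i ∈ S, 0 ≤ w i) (hP : ∀ i ∈ S, P i → T ≤ 2 * w i)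
    (hS : ∑ i ∈ S, w i < T) : #{i ∈ S | P i} ≤ 1 := by
  classical
  refine card_le_one.2 fun i hi j hj => ?_
  rw [mem_filter] at hi hj
  by_contra hij
  have hpair : w i + w j ≤ ∑ k ∈ S, w k := by
    rw [← sum_pair hij]
    exact sum_le_sum_of_subset_of_nonneg (by simp [insert_subset_iff, hi.1, hj.1])
      fun k hk _ => hw k hk
  linarith [hP i hi.1 hi.2, hP j hj.1 hj.2]

theorem card_filter_lt_ceil_of_sum_lt (hw : ∀ i ∈ S, 0 ≤ w i) (hP : ∀ i ∈ S, P i → w i = 1)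
    (hS : ∑ i ∈ S, w i < T) : #{i ∈ S | P i} < ⌈T⌉₊ := by
  rw [Nat.lt_ceil]
  calc (#{i ∈ S | P i} : ℝ) = ∑ i ∈ S with P i, w i := by
        rw [sum_congr rfl fun i hi => hP i (mem_filter.1 hi).1 (mem_filter.1 hi).2]
        simp
    _ ≤ ∑ i ∈ S, w i := sum_le_sum_of_subset_of_nonneg (filter_subset _ _) fun i hi _ => hw i hi
    _ < T := hS

end LightBlock

theorem exists_le_sum_Ico_of_eq_add_mul_ceil {n p L : ℕ} {w : ℕ → ℝ} {s : ℕ → ℕ} {T : ℝ}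
    {H : Finset ℕ} (hw : ∀ i, 0 ≤ w i) (hw_one : ∀ i, p ≤ i → w i = 1)
    (hH_lt : ∀ i ∈ H, i < p) (hH_heavy : ∀ i ∈ H, T ≤ 2 * w i) (hn : n ≤ #H + L)
    (hs : Monotone s) (hs0 : s 0 = 0) (hp : 0 < p) (hsn : s n = p + (L + 1) * ⌈T⌉₊) :
    ∃ j < n, T ≤ ∑ i ∈ Ico (s j) (s (j + 1)), w i := by
  by_contra! hlight
  obtain ⟨r, hrn, hsr, hsr1⟩ :=
    Nat.exists_apply_lt_le_apply_succ (f := s) (n := n) (hs0 ▸ hp) (by omega)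
  have hH : #H ≤ r + 1 := calc
    #H = #{i ∈ Ico (s 0) (s (r + 1)) | i ∈ H} := by
      rw [filter_mem_eq_inter, inter_eq_right.2 fun i hi => ?_]
      rw [mem_Ico, hs0]
      exact ⟨i.zero_le, (hH_lt i hi).trans_le hsr1⟩
    _ = ∑ j ∈ Ico 0 (r + 1), #{i ∈ Ico (s j) (s (j + 1)) | i ∈ H} :=
      card_filter_Ico_eq_sum_of_monotone hs _ (by omega)
    _ ≤ ∑ j ∈ Ico 0 (r + 1), 1 := sum_le_sum fun j hj =>
      card_filter_le_one_of_sum_lt (fun i _ => hw i) (fun i _ hi => hH_heavy i hi)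
        (hlight j (by rw [mem_Ico] at hj; omega))
    _ = r + 1 := by simp
  have hones : (L + 1) * ⌈T⌉₊ < (n - r) * ⌈T⌉₊ := calc
    (L + 1) * ⌈T⌉₊ = #{i ∈ Ico (s r) (s n) | p ≤ i} := by
      rw [Ico_filter_le, max_eq_right hsr.le, Nat.card_Ico]
      omega
    _ = ∑ j ∈ Ico r n, #{i ∈ Ico (s j) (s (j + 1)) | p ≤ i} :=
      card_filter_Ico_eq_sum_of_monotone hs _ hrn.le
    _ < ∑ j ∈ Ico r n, ⌈T⌉₊ := sum_lt_sum_of_nonempty (nonempty_Ico.2 hrn) fun j hj =>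
      card_filter_lt_ceil_of_sum_lt (fun i _ => hw i) (fun i _ hi => hw_one i hi)
        (hlight j (mem_Ico.1 hj).2)
    _ = (n - r) * ⌈T⌉₊ := by simp
  have := Nat.lt_of_mul_lt_mul_right hones
  omega

theorem appended_ones_force_heavy_block_general (p : ℕ) (hp : 2 ≤ p) (a : Fin p → ℝ)
    (hpos : ∀ i, 0 < a i) (α xmax : ℝ) :
    ∀ s : Fin (p + 1) → ℕ, Monotone s → s 0 = 0 →
      s (Fin.last p) =
        p + ((Finset.univ.filter fun i => a i < xmax / α).card + 1) * ⌈2 * xmax / α⌉₊ →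
      ∃ j : Fin p, 2 * xmax / α ≤
        ∑ i ∈ Finset.Ico (s j.castSucc) (s j.succ),
          (if h : i < p then a ⟨i, h⟩ else 1) := by
  intro s hs hs0 hslast
  set w : ℕ → ℝ := fun i => if h : i < p then a ⟨i, h⟩ else 1
  set H : Finset ℕ := ({i | ¬ a i < xmax / α} : Finset (Fin p)).map Fin.valEmbedding
  have hw (i : ℕ) : 0 ≤ w i := by
    simp only [w]; split_ifs <;> [exact (hpos _).le; exact zero_le_one]
  have hH_heavy : ∀ i ∈ H, 2 * xmax / α ≤ 2 * w i := by
    simp only [H, mem_map, mem_filter, mem_univ, true_and, Fin.valEmbedding_apply]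
    rintro _ ⟨i, hi, rfl⟩
    rw [show w i = a i from dif_pos i.is_lt, mul_div_assoc]
    linarith [not_lt.1 hi]
  have hcard : p ≤ #H + #{i | a i < xmax / α} := by
    rw [card_map, add_comm, card_filter_add_card_filter_not, card_univ, Fintype.card_fin]
  have ht : Monotone fun k => s (Fin.clamp k p) := fun k l hkl =>
    hs (Fin.mk_le_mk.2 (min_le_min_right p hkl))
  have hclamp (k : ℕ) (hk : k ≤ p) : Fin.clamp k p = ⟨k, Nat.lt_succ_of_le hk⟩ :=
    Fin.ext (min_eq_left hk)
  obtain ⟨j, hj, hheavy⟩ := exists_le_sum_Ico_of_eq_add_mul_ceil hw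
    (fun i hi => dif_neg hi.not_gt) (by simp [H]) hH_heavy hcard ht
    (by rwa [hclamp 0 (Nat.zero_le p)]) (by omega) (by rwa [hclamp p le_rfl])
  refine ⟨⟨j, hj⟩, ?_⟩
  rwa [hclamp j hj.le, hclamp (j + 1) hj] at hheavy

/-- Appending `(|L|+1)·⌈2x_max/α⌉` unit requests to `a_1, …, a_p` forces every partition into
`p` contiguous blocks to have some block of total weight at least `2x_max/α`. -/
theorem appended_ones_force_heavy_block (p : ℕ) (hp : 2 ≤ p) (a : Fin p → ℝ)
    (hpos : ∀ i, 0 < a i) (α xmax : ℝ) (hα : α ∈ Set.Ioo (1:ℝ) 2)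
    (hub : ∀ i, a i ≤ xmax) (hmem : ∃ i, a i = xmax) :
    ∀ s : Fin (p + 1) → ℕ, Monotone s → s 0 = 0 →
      s (Fin.last p) =
        p + ((Finset.univ.filter fun i => a i < xmax / α).card + 1) * ⌈2 * xmax / α⌉₊ →
      ∃ j : Fin p, 2 * xmax / α ≤
        ∑ i ∈ Finset.Ico (s j.castSucc) (s j.succ),
          (if h : i < p then a ⟨i, h⟩ else 1) :=
  appended_ones_force_heavy_block_general p hp a hpos α xmax
end
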